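/- Completeness of L*_CS with respect to subset models: let L* be a logic (consisting of cl, j+, jc* together with some subset of {j4, jd, jt}) and CS a constant specification, where CS is required to be axiomatically appropriate in case jd ∈ L* and jt ∉ L*. Then for every formula F ∈ L_J, if M, Γ ⊩ F for all L*_CS-subset models M and all Γ ∈ W0, then L*_CS ⊢ F. -/

import Mathlib

/-- Justification terms: constants `c_i`, variables `x_i`, the distinguished
constant `c*`, sum `+` and `!`. -/
inductive Tm : Type
  | const : ℕ → Tm
  | var : ℕ → Tm
  | cstar : Tm
  | plus : Tm → Tm → Tm
  | bang : Tm → Tm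

/-- Formulas of `L_J`: atomic propositions, `⊥`, implication and `t:F`. -/
inductive Fml : Type
  | atom : ℕ → Fml
  | bot : Fml
  | imp : Fml → Fml → Fml
  | just : Tm → Fml → Fml

namespace Fml
/-- `¬A := A → ⊥`. -/
def neg (A : Fml) : Fml := A.imp .bot
/-- `A ∨ B := ¬A → B`. -/
def or' (A B : Fml) : Fml := A.neg.imp B
/-- `A ∧ B := ¬(A → ¬B)`. -/
def and' (A B : Fml) : Fml := (A.imp B.neg).neg
end Fml

/-- `c*`-terms: `c*` itself, or `s + c` or `c + t` with `c` a `c*`-term. -/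
def Tm.isCStar : Tm → Bool
  | .cstar => true
  | .plus s t => s.isCStar || t.isCStar
  | _ => false

/-- Which of the optional axioms j4, jd, jt belong to the logic `L*`. -/
structure Flags : Type where
  j4 : Bool
  jd : Bool
  jt : Bool

/-- The axioms of the logic `L*`: classical propositional axioms, j+, jc*,
together with the optional axioms j4, jd, jt as given by the flags. -/
inductive StarAxiom (fl : Flags) : Fml → Prop
  | cl1 (A B : Fml) : StarAxiom fl (A.imp (B.imp A))
  | cl2 (A B C : Fml) :
      StarAxiom fl ((A.imp (B.imp C)).imp ((A.imp B).imp (A.imp C)))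
  | cl3 (A : Fml) : StarAxiom fl (A.neg.neg.imp A)
  | jplus (s t : Tm) (A : Fml) :
      StarAxiom fl (((Fml.just s A).or' (Fml.just t A)).imp (Fml.just (s.plus t) A))
  | jcstar (c : Tm) (A B : Fml) (h : c.isCStar = true) :
      StarAxiom fl (((Fml.just c A).and' (Fml.just c (A.imp B))).imp (Fml.just c B))
  | j4 (t : Tm) (A : Fml) (h : fl.j4 = true) :
      StarAxiom fl ((Fml.just t A).imp (Fml.just t.bang (Fml.just t A)))
  | jd (t : Tm) (h : fl.jd = true) :
      StarAxiom fl ((Fml.just t Fml.bot).imp Fml.bot)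
  | jt (t : Tm) (A : Fml) (h : fl.jt = true) :
      StarAxiom fl ((Fml.just t A).imp A)

/-- `bangIter n t = !…!t` with `n` occurrences of `!`. -/
def bangIter : ℕ → Tm → Tm
  | 0, t => t
  | n + 1, t => (bangIter n t).bang

/-- `anFml c A n = !…!c : !…!c : … : !c : c : A` (with `n, n-1, …, 1, 0` bangs). -/
def anFml (c : Tm) (A : Fml) : ℕ → Fml
  | 0 => Fml.just c A
  | n + 1 => Fml.just (bangIter (n + 1) c) (anFml c A n)

/-- A constant specification for `L*`: a set of pairs `(c, A)` where `c` is a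
constant and `A` an axiom of `L*`. -/
def IsCS (fl : Flags) (CS : Set (ℕ × Fml)) : Prop :=
  ∀ p ∈ CS, StarAxiom fl p.2

/-- `CS` is axiomatically appropriate: every axiom has a constant justifying it. -/
def AxAppropriate (fl : Flags) (CS : Set (ℕ × Fml)) : Prop :=
  ∀ A : Fml, StarAxiom fl A → ∃ c : ℕ, (c, A) ∈ CS

/-- Hilbert-style derivability in `L*_CS`: axioms of `L*`, modus ponens, and
axiom necessitation. -/
inductive Deriv (fl : Flags) (CS : Set (ℕ × Fml)) : Fml → Prop
  | ax {A : Fml} : StarAxiom fl A → Deriv fl CS A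
  | mp {A B : Fml} : Deriv fl CS (A.imp B) → Deriv fl CS A → Deriv fl CS B
  | an {c : ℕ} {A : Fml} (n : ℕ) (h : (c, A) ∈ CS) :
      Deriv fl CS (anFml (Tm.const c) A n)

/-- An `L*_CS`-subset model `(W, W0, V, E)`; `V ω F` encodes `V(ω,F) = 1`. -/
structure SubsetModel (fl : Flags) (CS : Set (ℕ × Fml)) (W : Type*) : Type _ where
  W0 : Set W
  V : W → Fml → Prop
  E : W → Tm → Set W
  w0_nonempty : W0.Nonempty
  v_bot : ∀ ω ∈ W0, ¬ V ω Fml.bot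
  v_imp : ∀ ω ∈ W0, ∀ F G : Fml, V ω (F.imp G) ↔ (¬ V ω F ∨ V ω G)
  v_just : ∀ ω ∈ W0, ∀ (t : Tm) (F : Fml),
      V ω (Fml.just t F) ↔ E ω t ⊆ {υ | V υ F}
  e_plus : ∀ ω ∈ W0, ∀ s t : Tm, E ω (s.plus t) ⊆ E ω s ∩ E ω t
  e_cstar : ∀ ω ∈ W0,
      E ω Tm.cstar ⊆ {υ | ∀ A B : Fml, V υ A → V υ (A.imp B) → V υ B}
  e_jd : fl.jd = true → ∀ ω ∈ W0, ∀ t : Tm, ∃ υ ∈ W0, υ ∈ E ω t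
  e_jt : fl.jt = true → ∀ ω ∈ W0, ∀ t : Tm, ω ∈ E ω t
  e_j4 : fl.j4 = true → ∀ ω ∈ W0, ∀ t : Tm,
      E ω t.bang ⊆ {υ | ∀ F : Fml, V ω (Fml.just t F) → V υ (Fml.just t F)}
  e_cs : ∀ ω ∈ W0, ∀ (c : ℕ) (A : Fml), (c, A) ∈ CS →
      E ω (Tm.const c) ⊆ {υ | V υ A}
  e_cs_bang : ∀ ω ∈ W0, ∀ (c : ℕ) (A : Fml), (c, A) ∈ CS → ∀ n : ℕ,
      E ω (bangIter (n + 1) (Tm.const c)) ⊆ {υ | V υ (anFml (Tm.const c) A n)}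

/-- The conjunction `⋀Σ` of a finite (list of) formulas. -/
def conjList : List Fml → Fml
  | [] => Fml.bot.imp Fml.bot
  | A :: l => A.and' (conjList l)

/-- `Γ` is `L*_CS`-consistent: `L*_CS ⊬ ⋀Σ → ⊥` for every finite `Σ ⊆ Γ`. -/
def SetConsistent (fl : Flags) (CS : Set (ℕ × Fml)) (Γ : Set Fml) : Prop :=
  ∀ l : List Fml, (∀ A ∈ l, A ∈ Γ) → ¬ Deriv fl CS ((conjList l).imp Fml.bot)

/-- `Γ` is maximal `L*_CS`-consistent: it is consistent and no proper superset
of it is consistent. -/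
def MaxConsistent (fl : Flags) (CS : Set (ℕ × Fml)) (Γ : Set Fml) : Prop :=
  SetConsistent fl CS Γ ∧ ∀ Δ : Set Fml, Γ ⊂ Δ → ¬ SetConsistent fl CS Δ

/-!
Canonical model argument. Worlds are arbitrary sets of formulas, the normal worlds are the
maximal consistent sets, a world satisfies the formulas it contains, and `E(Γ, t)` consists of the
sets containing `Γ/t = {A | t:A ∈ Γ}`, required to be closed under modus ponens when `t` is a
`c*`-term. Since `Γ/t` itself lies in `E(Γ, t)` (by jc* for `c*`-terms), the truth lemma for
`t:A` holds on the nose, and every other condition on subset models is a single axiom or rule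
of `L*_CS`. The only real work is the jd condition when jt is absent: `Γ/t` must extend to a maximal
consistent set. With an axiomatically appropriate `CS`, every consequence of `Γ/t` is justified in
`Γ` by some `c*`-term, so an inconsistent `Γ/t` would put some `u:⊥` into `Γ`, contradicting jd.
-/

inductive DerivFrom (fl : Flags) (CS : Set (ℕ × Fml)) (Γ : Set Fml) : Fml → Prop
  | hyp {A : Fml} : A ∈ Γ → DerivFrom fl CS Γ A
  | ax {A : Fml} : StarAxiom fl A → DerivFrom fl CS Γ A
  | an {c : ℕ} {A : Fml} (n : ℕ) : (c, A) ∈ CS → DerivFrom fl CS Γ (anFml (Tm.const c) A n)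
  | mp {A B : Fml} : DerivFrom fl CS Γ (A.imp B) → DerivFrom fl CS Γ A → DerivFrom fl CS Γ B

variable {fl : Flags} {CS : Set (ℕ × Fml)} {Γ Δ : Set Fml} {A B : Fml}

theorem Deriv.derivFrom (h : Deriv fl CS A) : DerivFrom fl CS Γ A := by
  induction h with
  | ax hA => exact .ax hA
  | mp _ _ ih₁ ih₂ => exact .mp ih₁ ih₂
  | an n hc => exact .an n hc

namespace DerivFrom

theorem deriv (h : DerivFrom fl CS ∅ A) : Deriv fl CS A := by
  induction h with
  | hyp hA => exact absurd hA (Set.notMem_empty _)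
  | ax hA => exact .ax hA
  | an n hc => exact .an n hc
  | mp _ _ ih₁ ih₂ => exact .mp ih₁ ih₂

theorem trans (hΔ : ∀ B ∈ Δ, DerivFrom fl CS Γ B) (h : DerivFrom fl CS Δ A) :
    DerivFrom fl CS Γ A := by
  induction h with
  | hyp hB => exact hΔ _ hB
  | ax hA => exact .ax hA
  | an n hc => exact .an n hc
  | mp _ _ ih₁ ih₂ => exact .mp ih₁ ih₂

theorem mono (hΓΔ : Γ ⊆ Δ) (h : DerivFrom fl CS Γ A) : DerivFrom fl CS Δ A :=
  h.trans fun _ hB => .hyp (hΓΔ hB)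

theorem weaken (h : DerivFrom fl CS Γ A) : DerivFrom fl CS (insert B Γ) A :=
  h.mono (Set.subset_insert B Γ)

theorem head : DerivFrom fl CS (insert A Γ) A :=
  .hyp (Set.mem_insert A Γ)

theorem imp_self : DerivFrom fl CS Γ (A.imp A) :=
  .mp (.mp (.ax (.cl2 A (A.imp A) A)) (.ax (.cl1 A (A.imp A)))) (.ax (.cl1 A A))

theorem deduction (h : DerivFrom fl CS (insert A Γ) B) : DerivFrom fl CS Γ (A.imp B) := by
  induction h with
  | hyp hB =>
    rcases Set.mem_insert_iff.1 hB with rfl | hB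
    · exact imp_self
    · exact .mp (.ax (.cl1 _ _)) (.hyp hB)
  | ax hB => exact .mp (.ax (.cl1 _ _)) (.ax hB)
  | an n hc => exact .mp (.ax (.cl1 _ _)) (.an n hc)
  | mp _ _ ih₁ ih₂ => exact .mp (.mp (.ax (.cl2 _ _ _)) ih₁) ih₂

theorem exfalso (h : DerivFrom fl CS Γ .bot) : DerivFrom fl CS Γ A :=
  .mp (.ax (.cl3 A)) (.mp (.ax (.cl1 .bot A.neg)) h)

theorem by_contra (h : DerivFrom fl CS (insert A.neg Γ) .bot) : DerivFrom fl CS Γ A :=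
  .mp (.ax (.cl3 A)) h.deduction

theorem and'_intro (hA : DerivFrom fl CS Γ A) (hB : DerivFrom fl CS Γ B) :
    DerivFrom fl CS Γ (A.and' B) :=
  deduction (.mp (.mp head hA.weaken) hB.weaken)

theorem and'_left (h : DerivFrom fl CS Γ (A.and' B)) : DerivFrom fl CS Γ A :=
  by_contra (.mp h.weaken (deduction (exfalso (.mp head.weaken head))))

theorem and'_right (h : DerivFrom fl CS Γ (A.and' B)) : DerivFrom fl CS Γ B :=
  by_contra (.mp h.weaken (.mp (.ax (.cl1 B.neg A)) head))

theorem or'_inl (h : DerivFrom fl CS Γ A) : DerivFrom fl CS Γ (A.or' B) :=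
  deduction (exfalso (.mp head h.weaken))

theorem or'_inr (h : DerivFrom fl CS Γ B) : DerivFrom fl CS Γ (A.or' B) :=
  .mp (.ax (.cl1 B A.neg)) h

theorem exists_list (h : DerivFrom fl CS Γ A) :
    ∃ l : List Fml, (∀ B ∈ l, B ∈ Γ) ∧ DerivFrom fl CS {B | B ∈ l} A := by
  induction h with
  | @hyp A hA => exact ⟨[A], by simpa using hA, .hyp (List.mem_singleton_self A)⟩
  | ax hA => exact ⟨[], by simp, .ax hA⟩
  | an n hc => exact ⟨[], by simp, .an n hc⟩
  | mp _ _ ih₁ ih₂ =>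
    obtain ⟨l₁, hl₁, d₁⟩ := ih₁
    obtain ⟨l₂, hl₂, d₂⟩ := ih₂
    refine ⟨l₁ ++ l₂, by simpa [or_imp, forall_and] using And.intro hl₁ hl₂,
      .mp (d₁.mono fun B hB => List.mem_append_left l₂ hB)
        (d₂.mono fun B hB => List.mem_append_right l₁ hB)⟩

theorem conjList_of_list (l : List Fml) : DerivFrom fl CS {B | B ∈ l} (conjList l) := by
  induction l with
  | nil => exact imp_self
  | cons A l ih =>
    exact and'_intro (.hyp List.mem_cons_self)
      (ih.mono fun B hB => List.mem_cons_of_mem A hB)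

theorem of_conjList {l : List Fml} (h : DerivFrom fl CS Γ (conjList l)) (hA : A ∈ l) :
    DerivFrom fl CS Γ A := by
  induction l with
  | nil => cases hA
  | cons B l ih =>
    rcases List.mem_cons.1 hA with rfl | hA
    · exact h.and'_left
    · exact ih h.and'_right hA

theorem deriv_conjList_imp {l : List Fml} (h : DerivFrom fl CS {B | B ∈ l} A) :
    Deriv fl CS ((conjList l).imp A) :=
  (deduction (h.trans fun _ hB => of_conjList head hB)).deriv

end DerivFrom

theorem setConsistent_iff : SetConsistent fl CS Γ ↔ ¬ DerivFrom fl CS Γ .bot := by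
  refine ⟨fun hΓ hbot => ?_, fun hbot l hl hl' => hbot ?_⟩
  · obtain ⟨l, hl, d⟩ := hbot.exists_list
    exact hΓ l hl d.deriv_conjList_imp
  · exact .mp hl'.derivFrom ((DerivFrom.conjList_of_list l).mono fun A hA => hl A hA)

theorem exists_maxConsistent_superset (h : SetConsistent fl CS Γ) :
    ∃ Δ, Γ ⊆ Δ ∧ MaxConsistent fl CS Δ := by
  have hfin : Order.IsOfFiniteCharacter {Δ | SetConsistent fl CS Δ} := fun Δ =>
    ⟨fun hΔ _ hΘ _ l hl => hΔ l fun A hA => hΘ (hl A hA),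
      fun hΔ l hl => hΔ {A | A ∈ l} hl (List.finite_toSet l) l fun _ => id⟩
  obtain ⟨Δ, hΓΔ, hΔ⟩ := hfin.exists_maximal h
  exact ⟨Δ, hΓΔ, hΔ.prop, fun Θ hΔΘ hΘ => hΔΘ.2 (hΔ.2 hΘ hΔΘ.1)⟩

namespace MaxConsistent

theorem not_derivFrom_bot (h : MaxConsistent fl CS Γ) : ¬ DerivFrom fl CS Γ .bot :=
  setConsistent_iff.1 h.1

theorem derivFrom_insert_bot_of_notMem (h : MaxConsistent fl CS Γ) (hA : A ∉ Γ) :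
    DerivFrom fl CS (insert A Γ) .bot :=
  not_not.1 fun hcons => h.2 _ (Set.ssubset_insert hA) (setConsistent_iff.2 hcons)

theorem mem_of_derivFrom (h : MaxConsistent fl CS Γ) (hA : DerivFrom fl CS Γ A) : A ∈ Γ :=
  by_contra fun hA' => h.not_derivFrom_bot (.mp (h.derivFrom_insert_bot_of_notMem hA').deduction hA)

theorem mem_of_deriv (h : MaxConsistent fl CS Γ) (hA : Deriv fl CS A) : A ∈ Γ :=
  h.mem_of_derivFrom hA.derivFrom

theorem mp_mem (h : MaxConsistent fl CS Γ) (hA : A ∈ Γ) (hAB : A.imp B ∈ Γ) : B ∈ Γ :=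
  h.mem_of_derivFrom (.mp (.hyp hAB) (.hyp hA))

theorem bot_notMem (h : MaxConsistent fl CS Γ) : Fml.bot ∉ Γ :=
  fun hbot => h.not_derivFrom_bot (.hyp hbot)

theorem neg_mem_of_notMem (h : MaxConsistent fl CS Γ) (hA : A ∉ Γ) : A.neg ∈ Γ :=
  h.mem_of_derivFrom (h.derivFrom_insert_bot_of_notMem hA).deduction

theorem imp_mem_iff (h : MaxConsistent fl CS Γ) : A.imp B ∈ Γ ↔ A ∉ Γ ∨ B ∈ Γ := by
  refine ⟨fun hAB => or_iff_not_imp_left.2 fun hA => h.mp_mem (not_not.1 hA) hAB, ?_⟩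
  rintro (hA | hB)
  · have hnA : DerivFrom fl CS Γ A.neg := .hyp (h.neg_mem_of_notMem hA)
    exact h.mem_of_derivFrom (.deduction (.exfalso (.mp hnA.weaken .head)))
  · exact h.mem_of_derivFrom (.mp (.ax (.cl1 B A)) (.hyp hB))

theorem just_plus_left (h : MaxConsistent fl CS Γ) {s : Tm} (t : Tm)
    (hA : Fml.just s A ∈ Γ) : Fml.just (s.plus t) A ∈ Γ :=
  h.mem_of_derivFrom (.mp (.ax (.jplus s t A)) (DerivFrom.hyp hA).or'_inl)

theorem just_plus_right (h : MaxConsistent fl CS Γ) (s : Tm) {t : Tm}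
    (hA : Fml.just t A ∈ Γ) : Fml.just (s.plus t) A ∈ Γ :=
  h.mem_of_derivFrom (.mp (.ax (.jplus s t A)) (DerivFrom.hyp hA).or'_inr)

theorem just_mp (h : MaxConsistent fl CS Γ) {c : Tm} (hc : c.isCStar = true)
    (hA : Fml.just c A ∈ Γ) (hAB : Fml.just c (A.imp B) ∈ Γ) : Fml.just c B ∈ Γ :=
  h.mem_of_derivFrom (.mp (.ax (.jcstar c A B hc)) (.and'_intro (.hyp hA) (.hyp hAB)))

end MaxConsistent

def justifiedBy (Γ : Set Fml) (t : Tm) : Set Fml :=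
  {A | Fml.just t A ∈ Γ}

def cstarJustified (Γ : Set Fml) : Set Fml :=
  {A | ∃ u : Tm, u.isCStar = true ∧ Fml.just u A ∈ Γ}

def IsMPClosed (S : Set Fml) : Prop :=
  ∀ A B : Fml, A ∈ S → A.imp B ∈ S → B ∈ S

def canonicalE (Γ : Set Fml) (t : Tm) : Set (Set Fml) :=
  {S | justifiedBy Γ t ⊆ S ∧ (t.isCStar = true → IsMPClosed S)}

namespace MaxConsistent

theorem isMPClosed (h : MaxConsistent fl CS Γ) : IsMPClosed Γ :=
  fun _ _ => h.mp_mem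

theorem justifiedBy_mem_canonicalE (h : MaxConsistent fl CS Γ) (t : Tm) :
    justifiedBy Γ t ∈ canonicalE Γ t :=
  ⟨subset_rfl, fun hc _ _ => h.just_mp hc⟩

theorem self_mem_canonicalE (hjt : fl.jt = true) (h : MaxConsistent fl CS Γ) (t : Tm) :
    Γ ∈ canonicalE Γ t :=
  ⟨fun A hA => h.mem_of_derivFrom (.mp (.ax (.jt t A hjt)) (.hyp hA)), fun _ => h.isMPClosed⟩

theorem justifiedBy_subset_cstarJustified (h : MaxConsistent fl CS Γ) (t : Tm) :
    justifiedBy Γ t ⊆ cstarJustified Γ :=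
  fun _ hA => ⟨t.plus .cstar, by simp [Tm.isCStar], h.just_plus_left _ hA⟩

theorem mem_cstarJustified_of_derivFrom (hApp : AxAppropriate fl CS)
    (h : MaxConsistent fl CS Γ) (hB : DerivFrom fl CS (cstarJustified Γ) B) :
    B ∈ cstarJustified Γ := by
  induction hB with
  | hyp hB => exact hB
  | @ax A hA =>
    obtain ⟨c, hc⟩ := hApp A hA
    exact ⟨(Tm.const c).plus .cstar, by simp [Tm.isCStar],
      h.just_plus_left _ (h.mem_of_deriv (.an 0 hc))⟩
  | @an c A n hc =>
    exact ⟨(bangIter (n + 1) (Tm.const c)).plus .cstar, by simp [Tm.isCStar],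
      h.just_plus_left _ (h.mem_of_deriv (.an (n + 1) hc))⟩
  | mp _ _ ih₁ ih₂ =>
    obtain ⟨u₁, hu₁, hAB⟩ := ih₁
    obtain ⟨u₂, -, hA⟩ := ih₂
    exact ⟨u₁.plus u₂, by simp [Tm.isCStar, hu₁],
      h.just_mp (by simp [Tm.isCStar, hu₁]) (h.just_plus_right u₁ hA) (h.just_plus_left u₂ hAB)⟩

theorem setConsistent_justifiedBy (hjd : fl.jd = true) (hApp : AxAppropriate fl CS)
    (h : MaxConsistent fl CS Γ) (t : Tm) : SetConsistent fl CS (justifiedBy Γ t) := by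
  refine setConsistent_iff.2 fun hbot => ?_
  obtain ⟨u, -, hu⟩ :=
    h.mem_cstarJustified_of_derivFrom hApp (hbot.mono (h.justifiedBy_subset_cstarJustified t))
  exact h.bot_notMem (h.mp_mem hu (h.mem_of_deriv (.ax (.jd u hjd))))

end MaxConsistent

def canonicalModel (fl : Flags) (CS : Set (ℕ × Fml))
    (hApp : fl.jd = true → fl.jt = false → AxAppropriate fl CS)
    (hW0 : {Γ | MaxConsistent fl CS Γ}.Nonempty) : SubsetModel fl CS (Set Fml) where
  W0 := {Γ | MaxConsistent fl CS Γ}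
  V Γ A := A ∈ Γ
  E := canonicalE
  w0_nonempty := hW0
  v_bot _ h := h.bot_notMem
  v_imp _ h _ _ := h.imp_mem_iff
  v_just _ h t _ := ⟨fun hA _ hS => hS.1 hA, fun hE => hE (h.justifiedBy_mem_canonicalE t)⟩
  e_plus _ h s t _ hS :=
    ⟨⟨fun _ hA => hS.1 (h.just_plus_left t hA), fun hs => hS.2 (by simp [Tm.isCStar, hs])⟩,
      ⟨fun _ hA => hS.1 (h.just_plus_right s hA), fun ht => hS.2 (by simp [Tm.isCStar, ht])⟩⟩
  e_cstar _ _ _ hS := hS.2 rfl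
  e_jd hjd Γ h t := by
    cases hjt : fl.jt
    · obtain ⟨Δ, hΔ, hmax⟩ :=
        exists_maxConsistent_superset (h.setConsistent_justifiedBy hjd (hApp hjd hjt) t)
      exact ⟨Δ, hmax, hΔ, fun _ => hmax.isMPClosed⟩
    · exact ⟨Γ, h, h.self_mem_canonicalE hjt t⟩
  e_jt hjt _ h t := h.self_mem_canonicalE hjt t
  e_j4 hj4 _ h t _ hS A hA := hS.1 (h.mem_of_derivFrom (.mp (.ax (.j4 t A hj4)) (.hyp hA)))
  e_cs _ h _ _ hcA _ hS := hS.1 (h.mem_of_deriv (.an 0 hcA))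
  e_cs_bang _ h _ _ hcA n _ hS := hS.1 (h.mem_of_deriv (.an (n + 1) hcA))

theorem completeness_general (fl : Flags) (CS : Set (ℕ × Fml))
    (hApp : fl.jd = true → fl.jt = false → AxAppropriate fl CS) (F : Fml)
    (h : ∀ (W : Type) (M : SubsetModel fl CS W), ∀ Γ ∈ M.W0, M.V Γ F) :
    Deriv fl CS F := by
  by_contra hF
  have hcons : SetConsistent fl CS {F.neg} :=
    setConsistent_iff.2 fun hbot => hF (DerivFrom.by_contra (hbot.mono (by simp))).deriv
  obtain ⟨Γ, hFΓ, hΓ⟩ := exists_maxConsistent_superset hcons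
  have hFmem : F ∈ Γ := h _ (canonicalModel fl CS hApp ⟨Γ, hΓ⟩) Γ hΓ
  exact hΓ.bot_notMem (hΓ.mp_mem hFmem (hFΓ rfl))

/-- **Completeness of `L*_CS` with respect to subset models**: if `CS` is
axiomatically appropriate in case `jd ∈ L*` and `jt ∉ L*`, then any formula
true at all normal worlds of all `L*_CS`-subset models is derivable. -/
theorem completeness (fl : Flags) (CS : Set (ℕ × Fml)) (hCS : IsCS fl CS)
    (hApp : fl.jd = true → fl.jt = false → AxAppropriate fl CS) (F : Fml)
    (h : ∀ (W : Type) (M : SubsetModel fl CS W), ∀ Γ ∈ M.W0, M.V Γ F) :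
    Deriv fl CS F :=
  completeness_general fl CS hApp F h
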